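/- (Correctness of the MILP model of the differential part) Let n be even, a > b, gcd(n, a−b) = 1, and let f : F₂ⁿ → F₂ⁿ be f(x) = (Sᵃ(x) ∧ Sᵇ(x)) ⊕ Sᶜ(x). Fix α, β ∈ {0,1}ⁿ with α ≠ 1ⁿ. Consider the constraint system in binary variables γ, varibits, doublebits, probits ∈ {0,1}ⁿ and integer variable pro consisting of, for each i (indices mod n): (i) varibits_i = α_{i+a} ∨ α_{i+b} encoded by {varibits_i − α_{i+a} ≥ 0, varibits_i − α_{i+b} ≥ 0, α_{i+a} + α_{i+b} − varibits_i ≥ 0}; (ii) doublebits_i = α_{i+b} ∧ ¬α_{i+a} ∧ α_{i+2a−b} encoded by {doublebits_i + α_{i+a} ≤ 1, doublebits_i − α_{i+b} ≤ 0, doublebits_i − α_{i+2a−b} ≤ 0, doublebits_i + α_{i+a} − α_{i+b} − α_{i+2a−b} ≥ −1}; (iii) β_i = γ_i ⊕ α_{i+c} encoded by {γ_i + α_{i+c} − β_i ≥ 0, γ_i − α_{i+c} + β_i ≥ 0, −γ_i + α_{i+c} + β_i ≥ 0, γ_i + α_{i+c} + β_i ≤ 2}; (iv) Σ_i α_i ≤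 n − 1; (v) {γ_i − varibits_i ≤ 0, γ_i − γ_{i+a−b} + doublebits_i ≤ 1, −γ_i + γ_{i+a−b} + doublebits_i ≤ 1}; (vi) probits_i = varibits_i ⊕ doublebits_i encoded by the analogous four XOR inequalities and pro = Σ_i probits_i. Then this system is feasible if and only if the differential probability Pr(α →f β) > 0, and in every feasible solution, Pr(α →f β) = 2^{−pro}. -/

import Mathlib

/-- Circular left shift by `t` bits: `(rotL n t x) i = x ((i + t) % n)`. -/
def rotL (n t : ℕ) (x : Fin n → Bool) : Fin n → Bool :=
  fun i => x ⟨(i.val + t) % n, Nat.mod_lt _ i.pos⟩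

/-- Interpret a binary variable as the integer `0` or `1`. -/
def b2i (x : Bool) : ℤ := if x then 1 else 0

/-- Differential probability `Pr(α →f β) = #{x : f(x) ⊕ f(x ⊕ α) = β} / 2^n`. -/
noncomputable def diffProb (n : ℕ) (f : (Fin n → Bool) → Fin n → Bool)
    (α β : Fin n → Bool) : ℚ :=
  ((Finset.univ.filter fun x : Fin n → Bool =>
      (fun i => xor (f x i) (f (fun j => xor (x j) (α j)) i)) = β).card : ℚ) / 2 ^ n

/-- The MILP constraint system of the differential part of a Simon-like round,
for fixed input/output differences `α`, `β`, in the binary variables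
`γ, varibits, doublebits, probits` and the integer variable `pro`. -/
def Sys (n a b c : ℕ) (α β γ varibits doublebits probits : Fin n → Bool) (pro : ℤ) : Prop :=
  (∀ i : Fin n,
    -- (i) varibits_i = α_{i+a} ∨ α_{i+b}
    b2i (varibits i) - b2i (rotL n a α i) ≥ 0 ∧
    b2i (varibits i) - b2i (rotL n b α i) ≥ 0 ∧
    b2i (rotL n a α i) + b2i (rotL n b α i) - b2i (varibits i) ≥ 0 ∧
    -- (ii) doublebits_i = α_{i+b} ∧ ¬α_{i+a} ∧ α_{i+2a−b}
    b2i (doublebits i) + b2i (rotL n a α i) ≤ 1 ∧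
    b2i (doublebits i) - b2i (rotL n b α i) ≤ 0 ∧
    b2i (doublebits i) - b2i (rotL n (2 * a - b) α i) ≤ 0 ∧
    b2i (doublebits i) + b2i (rotL n a α i) - b2i (rotL n b α i)
      - b2i (rotL n (2 * a - b) α i) ≥ -1 ∧
    -- (iii) β_i = γ_i ⊕ α_{i+c}
    b2i (γ i) + b2i (rotL n c α i) - b2i (β i) ≥ 0 ∧
    b2i (γ i) - b2i (rotL n c α i) + b2i (β i) ≥ 0 ∧
    -b2i (γ i) + b2i (rotL n c α i) + b2i (β i) ≥ 0 ∧
    b2i (γ i) + b2i (rotL n c α i) + b2i (β i) ≤ 2 ∧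
    -- (v) validity conditions
    b2i (γ i) - b2i (varibits i) ≤ 0 ∧
    b2i (γ i) - b2i (rotL n (a - b) γ i) + b2i (doublebits i) ≤ 1 ∧
    -b2i (γ i) + b2i (rotL n (a - b) γ i) + b2i (doublebits i) ≤ 1 ∧
    -- (vi) probits_i = varibits_i ⊕ doublebits_i
    b2i (varibits i) + b2i (doublebits i) - b2i (probits i) ≥ 0 ∧
    b2i (varibits i) - b2i (doublebits i) + b2i (probits i) ≥ 0 ∧
    -b2i (varibits i) + b2i (doublebits i) + b2i (probits i) ≥ 0 ∧
    b2i (varibits i) + b2i (doublebits i) + b2i (probits i) ≤ 2) ∧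
  -- (iv) Σ_i α_i ≤ n − 1
  (∑ i : Fin n, b2i (α i)) ≤ (n : ℤ) - 1 ∧
  -- (vi) pro = Σ_i probits_i
  pro = ∑ i : Fin n, b2i (probits i)

/-!
Bit `i` of `f(x) ⊕ f(x ⊕ α)` is `(α_{i+b} ∧ x_{i+a}) ⊕ (α_{i+a} ∧ x_{i+b}) ⊕ (α_{i+a} ∧ α_{i+b}) ⊕
α_{i+c}`, so the inputs with output difference `β` solve an affine system in `x` with right-hand
side `γ = β ⊕ Sᶜ(α)`. As `e := a - b` is a unit mod `n`, the substitution `i = k e`,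
`A_k = α_{b+ke}`, `u_k = x_{b+ke}` turns it into a cyclic chain: the `k`-th equation involves only
`u_k` and `u_{k+1}`. Since `A` has a zero, the chain is solved by one sweep starting there: each
`u_k` is either forced by the equations at `k - 1` and `k` or free, and the forced values are
consistent exactly under the validity conditions (v). The free positions (starts of runs of ones
of `A`, and zeros of `A` with no neighbouring one) number `n - Σ probits`, which gives
`2 ^ (n - Σ probits)` solutions.
-/

open Fin.CommRing

section Chain

variable {n : ℕ} [NeZero n] (A Γ : Fin n → Bool)

def ChainEq (u : Fin n → Bool) : Prop :=
  ∀ k, ((A k && u (k + 1)) ^^ (A (k + 1) && u k) ^^ (A k && A (k + 1))) = Γ k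

def ChainCompatible : Prop :=
  (∀ k, Γ k = true → (A (k + 1) || A k) = true) ∧
  (∀ k, A k = true → A (k + 1) = false → A (k + 2) = true → Γ k = Γ (k + 1))

def probBit (k : Fin n) : Bool :=
  (A (k + 1) || A k) ^^ (A k && !A (k + 1) && A (k + 2))

def freeBit (k : Fin n) : Bool :=
  (A k && !A (k - 1)) || (!A (k - 1) && !A k && !A (k + 1))

/-- The value that the equations at `q - 1` and `q` force on `u q` once `u (q - 1) = prev`;
it is `fresh` exactly when they force nothing. -/
def chainStep (q : Fin n) (fresh prev : Bool) : Bool :=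
  if A q then (if A (q - 1) then !(prev ^^ Γ (q - 1)) else fresh)
  else if A (q + 1) then Γ q else if A (q - 1) then Γ (q - 1) else fresh

def chainSweep (c : Fin n → Bool) (z : Fin n) : ℕ → Bool
  | 0 => chainStep A Γ z (c z) false
  | j + 1 => chainStep A Γ (z + (j + 1 : ℕ)) (c (z + (j + 1 : ℕ))) (chainSweep c z j)

def chainSolution (c : Fin n → Bool) (z : Fin n) (q : Fin n) : Bool :=
  chainSweep A Γ c z (q - z).val

/-- The last indicator on each side marks a rise `0 → 1` of `A`; summed over the cycle, the two
cancel. -/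
lemma freeBit_add_one_add_probBit (k : Fin n) :
    (freeBit A (k + 1)).toNat + (probBit A k).toNat + (!A (k + 1) && A (k + 2)).toNat =
      1 + (!A k && A (k + 1)).toNat := by
  rw [freeBit, probBit, add_sub_cancel_right, show k + 1 + 1 = k + 2 by ring]
  cases A k <;> cases A (k + 1) <;> cases A (k + 2) <;> rfl

lemma card_freeBit_add_sum_probBit :
    Nat.card {k // freeBit A k = true} + ∑ k, (probBit A k).toNat = n := by
  have hsum := Finset.sum_congr rfl fun k (_ : k ∈ Finset.univ) => freeBit_add_one_add_probBit A k
  simp only [Finset.sum_add_distrib, Finset.sum_const, Finset.card_univ, Fintype.card_fin,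
    smul_eq_mul, mul_one] at hsum
  have hfree : ∑ k, (freeBit A (k + 1)).toNat = ∑ k, (freeBit A k).toNat :=
    Fintype.sum_equiv (Equiv.addRight 1) _ _ fun _ => rfl
  have hrise : ∑ k, (!A (k + 1) && A (k + 2)).toNat = ∑ k, (!A k && A (k + 1)).toNat :=
    Fintype.sum_equiv (Equiv.addRight 1) _ _ fun k => by
      rw [Equiv.coe_addRight, add_assoc, one_add_one_eq_two]
  rw [hfree, hrise] at hsum
  have hcard : Nat.card {k // freeBit A k = true} = ∑ k, (freeBit A k).toNat := by
    rw [Nat.card_eq_fintype_card, Fintype.card_subtype, Finset.card_filter]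
    exact Finset.sum_congr rfl fun k _ => by cases freeBit A k <;> rfl
  omega

variable {A Γ}

lemma chainStep_congr {q : Fin n} {v v' p p' : Bool} (hv : freeBit A q = true → v = v')
    (hp : A q = true → A (q - 1) = true → p = p') :
    chainStep A Γ q v p = chainStep A Γ q v' p' := by
  unfold chainStep
  unfold freeBit at hv
  generalize A (q - 1) = a₀ at *
  generalize A q = a₁ at *
  generalize A (q + 1) = a₂ at *
  cases a₀ <;> cases a₁ <;> cases a₂ <;> simp_all

lemma chainStep_of_freeBit {q : Fin n} (h : freeBit A q = true) (v p : Bool) :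
    chainStep A Γ q v p = v := by
  unfold chainStep
  unfold freeBit at h
  generalize A (q - 1) = a₀ at *
  generalize A q = a₁ at *
  generalize A (q + 1) = a₂ at *
  cases a₀ <;> cases a₁ <;> cases a₂ <;> simp_all

lemma ChainEq.compatible {u : Fin n → Bool} (hu : ChainEq A Γ u) : ChainCompatible A Γ := by
  refine ⟨fun k hk => ?_, fun k h₀ h₁ h₂ => ?_⟩
  · have h := hu k
    generalize A k = a₀ at *
    generalize A (k + 1) = a₁ at *
    cases a₀ <;> cases a₁ <;> simp_all
  · have h := hu k
    have h' := hu (k + 1)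
    rw [show k + 1 + 1 = k + 2 by ring] at h'
    simp_all

lemma ChainEq.eq_chainStep {u : Fin n → Bool} (hu : ChainEq A Γ u) (q : Fin n) :
    u q = chainStep A Γ q (u q) (u (q - 1)) := by
  have h := hu q
  have h' := hu (q - 1)
  rw [sub_add_cancel] at h'
  unfold chainStep
  generalize A (q - 1) = a₀ at *
  generalize A q = a₁ at *
  generalize A (q + 1) = a₂ at *
  generalize u (q - 1) = v₀ at *
  generalize u q = v₁ at *
  cases a₀ <;> cases a₁ <;> cases a₂ <;> cases v₀ <;> cases v₁ <;> simp_all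

lemma chainEq_of_eq_chainStep (hc : ChainCompatible A Γ) {u c : Fin n → Bool}
    (hu : ∀ q, u q = chainStep A Γ q (c q) (u (q - 1))) : ChainEq A Γ u := by
  intro k
  have hk := hu k
  have hk₁ := hu (k + 1)
  simp only [chainStep, add_sub_cancel_right, show k + 1 + 1 = k + 2 by ring] at hk hk₁
  cases h₀ : A k <;> cases h₁ : A (k + 1)
  · cases hΓ : Γ k
    · simp
    · simpa [h₀, h₁] using hc.1 k hΓ
  · simp [h₀, h₁] at hk ⊢
    exact hk
  · cases h₂ : A (k + 2) <;> simp [h₀, h₁, h₂, hc.2 k h₀ h₁] at hk₁ ⊢ <;> exact hk₁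
  · simp only [h₀, h₁, if_true] at hk₁
    rw [hk₁]
    cases u k <;> cases Γ k <;> rfl

lemma eq_of_eq_chainStep {z : Fin n} (hz : A z = false) {u u' c c' : Fin n → Bool}
    (hu : ∀ q, u q = chainStep A Γ q (c q) (u (q - 1)))
    (hu' : ∀ q, u' q = chainStep A Γ q (c' q) (u' (q - 1)))
    (hc : ∀ q, freeBit A q = true → c q = c' q) : u = u' := by
  have key : ∀ j : ℕ, u (z + j) = u' (z + j) := by
    intro j
    induction j with
    | zero =>
      simp only [Nat.cast_zero, add_zero]
      rw [hu, hu']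
      exact chainStep_congr (hc z) (by simp [hz])
    | succ j ih =>
      rw [hu, hu']
      refine chainStep_congr (hc _) fun _ _ => ?_
      rwa [Nat.cast_succ, ← add_assoc, add_sub_cancel_right]
  funext q
  simpa using key (q - z).val

lemma chainSolution_add_natCast (c : Fin n → Bool) (z : Fin n) {j : ℕ} (hj : j < n) :
    chainSolution A Γ c z (z + j) = chainSweep A Γ c z j := by
  rw [chainSolution, add_sub_cancel_left, Fin.val_natCast, Nat.mod_eq_of_lt hj]

lemma chainSolution_eq_chainStep {z : Fin n} (hz : A z = false) (c : Fin n → Bool) (q : Fin n) :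
    chainSolution A Γ c z q = chainStep A Γ q (c q) (chainSolution A Γ c z (q - 1)) := by
  obtain ⟨j, hj, rfl⟩ : ∃ j < n, q = z + j := ⟨(q - z).val, (q - z).isLt, by simp⟩
  rw [chainSolution_add_natCast c z hj]
  cases j with
  | zero =>
    simp only [Nat.cast_zero, add_zero, chainSweep]
    exact chainStep_congr (fun _ => rfl) (by simp [hz])
  | succ j =>
    rw [Nat.cast_succ, ← add_assoc, add_sub_cancel_right,
      chainSolution_add_natCast c z (by omega), chainSweep, Nat.cast_succ, ← add_assoc]

def chainEqEquiv {z : Fin n} (hz : A z = false) (hc : ChainCompatible A Γ) :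
    {u // ChainEq A Γ u} ≃ ({k // freeBit A k = true} → Bool) where
  toFun u k := u.1 k
  invFun c := ⟨chainSolution A Γ (fun q => if h : freeBit A q = true then c ⟨q, h⟩ else false) z,
    chainEq_of_eq_chainStep hc (chainSolution_eq_chainStep hz _)⟩
  left_inv u := Subtype.ext <| eq_of_eq_chainStep hz (chainSolution_eq_chainStep hz _)
    u.2.eq_chainStep fun q hq => by simp [hq]
  right_inv c := funext fun k => by
    dsimp only
    rw [chainSolution_eq_chainStep hz _ k.1, chainStep_of_freeBit k.2, dif_pos k.2]

lemma card_chainEq {z : Fin n} (hz : A z = false) (hc : ChainCompatible A Γ) :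
    Nat.card {u // ChainEq A Γ u} = 2 ^ Nat.card {k // freeBit A k = true} := by
  rw [Nat.card_congr (chainEqEquiv hz hc), Nat.card_fun, Nat.card_eq_fintype_card,
    Fintype.card_bool]

end Chain

section Differential

variable {n : ℕ}

lemma rotL_apply [NeZero n] (t : ℕ) (y : Fin n → Bool) (i : Fin n) :
    rotL n t y i = y (i + t) := by
  simp only [rotL]
  congr 1
  ext
  rw [Fin.val_add, Fin.val_natCast, Nat.add_mod_mod]

def strand [NeZero n] (b e : ℕ) (y : Fin n → Bool) (k : Fin n) : Bool := y (b + k * e)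

lemma rotL_mul_eq_strand [NeZero n] {t b e j : ℕ} (ht : t = b + j * e) (y : Fin n → Bool)
    (k : Fin n) : rotL n t y (k * e) = strand b e y (k + j) := by
  rw [rotL_apply, strand, ht]
  push_cast
  ring_nf

variable (n) (a b c : ℕ) (α β : Fin n → Bool)

def varibitsOf : Fin n → Bool := fun i => rotL n a α i || rotL n b α i

def doublebitsOf : Fin n → Bool :=
  fun i => rotL n b α i && !rotL n a α i && rotL n (2 * a - b) α i

def probitsOf : Fin n → Bool := fun i => varibitsOf n a b α i ^^ doublebitsOf n a b α i

def andOutDiff : Fin n → Bool := fun i => β i ^^ rotL n c α i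

def IsValidAndDiff (γ : Fin n → Bool) : Prop :=
  (∀ i, γ i = true → varibitsOf n a b α i = true) ∧
  (∀ i, doublebitsOf n a b α i = true → γ i = rotL n (a - b) γ i)

variable {n a b c α β}

lemma xor_diff_simon_apply {f : (Fin n → Bool) → Fin n → Bool}
    (hf : ∀ x, f x = fun i => (rotL n a x i && rotL n b x i) ^^ rotL n c x i)
    (x : Fin n → Bool) (i : Fin n) :
    (f x i ^^ f (fun j => x j ^^ α j) i) =
      ((rotL n b α i && rotL n a x i) ^^ (rotL n a α i && rotL n b x i) ^^
        (rotL n a α i && rotL n b α i) ^^ rotL n c α i) := by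
  have hxor (t : ℕ) : rotL n t (fun j => x j ^^ α j) i = (rotL n t x i ^^ rotL n t α i) := rfl
  simp only [hf, hxor]
  cases rotL n a x i <;> cases rotL n b x i <;> cases rotL n c x i <;> cases rotL n a α i <;>
    cases rotL n b α i <;> cases rotL n c α i <;> rfl

section Reindex

variable [NeZero n]

lemma varibitsOf_mul (hab : b ≤ a) (k : Fin n) :
    varibitsOf n a b α (k * (a - b : ℕ)) =
      (strand b (a - b) α (k + 1) || strand b (a - b) α k) := by
  rw [varibitsOf, rotL_mul_eq_strand (show a = b + 1 * (a - b) by omega),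
    rotL_mul_eq_strand (show b = b + 0 * (a - b) by omega)]
  simp

lemma doublebitsOf_mul (hab : b ≤ a) (k : Fin n) :
    doublebitsOf n a b α (k * (a - b : ℕ)) =
      (strand b (a - b) α k && !strand b (a - b) α (k + 1) && strand b (a - b) α (k + 2)) := by
  rw [doublebitsOf, rotL_mul_eq_strand (show a = b + 1 * (a - b) by omega),
    rotL_mul_eq_strand (show b = b + 0 * (a - b) by omega),
    rotL_mul_eq_strand (show 2 * a - b = b + 2 * (a - b) by omega)]
  simp

lemma probitsOf_mul (hab : b ≤ a) (k : Fin n) :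
    probitsOf n a b α (k * (a - b : ℕ)) = probBit (strand b (a - b) α) k := by
  rw [probitsOf, varibitsOf_mul hab, doublebitsOf_mul hab, probBit]

lemma isValidAndDiff_iff_chainCompatible (hab : b ≤ a)
    (hρ : Function.Surjective (· * ((a - b : ℕ) : Fin n))) (γ : Fin n → Bool) :
    IsValidAndDiff n a b α γ ↔ ChainCompatible (strand b (a - b) α) (strand 0 (a - b) γ) := by
  have hγ (k : Fin n) : γ (k * (a - b : ℕ)) = strand 0 (a - b) γ k := by simp [strand]
  refine and_congr (hρ.forall.trans <| forall_congr' fun k => ?_)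
    (hρ.forall.trans <| forall_congr' fun k => ?_)
  · rw [varibitsOf_mul hab, hγ]
  · rw [doublebitsOf_mul hab, hγ, rotL_mul_eq_strand (show a - b = 0 + 1 * (a - b) by omega),
      Nat.cast_one]
    simp only [Bool.and_eq_true, Bool.not_eq_true', and_imp]

lemma xorDiff_eq_iff_chainEq {f : (Fin n → Bool) → Fin n → Bool}
    (hf : ∀ x, f x = fun i => (rotL n a x i && rotL n b x i) ^^ rotL n c x i) (hab : b ≤ a)
    (hρ : Function.Surjective (· * ((a - b : ℕ) : Fin n))) (x : Fin n → Bool) :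
    (fun i => f x i ^^ f (fun j => x j ^^ α j) i) = β ↔
      ChainEq (strand b (a - b) α) (strand 0 (a - b) (andOutDiff n c α β))
        (strand b (a - b) x) := by
  rw [funext_iff, hρ.forall, ChainEq]
  refine forall_congr' fun k => ?_
  simp only [xor_diff_simon_apply hf, rotL_mul_eq_strand (show a = b + 1 * (a - b) by omega),
    rotL_mul_eq_strand (show b = b + 0 * (a - b) by omega), Nat.cast_one, Nat.cast_zero, add_zero,
    strand, andOutDiff, zero_add]
  generalize α (b + k * (a - b : ℕ)) = a₀
  generalize α (b + (k + 1) * (a - b : ℕ)) = a₁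
  generalize x (b + k * (a - b : ℕ)) = x₀
  generalize x (b + (k + 1) * (a - b : ℕ)) = x₁
  cases a₀ <;> cases a₁ <;> cases x₀ <;> cases x₁ <;> cases β (k * (a - b : ℕ)) <;>
    cases rotL n c α (k * (a - b : ℕ)) <;> decide

lemma card_xorDiff_eq_card_chainEq {f : (Fin n → Bool) → Fin n → Bool}
    (hf : ∀ x, f x = fun i => (rotL n a x i && rotL n b x i) ^^ rotL n c x i) (hab : b ≤ a)
    (hρ : Function.Bijective (· * ((a - b : ℕ) : Fin n))) :
    Nat.card {x // (fun i => f x i ^^ f (fun j => x j ^^ α j) i) = β} =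
      Nat.card {u // ChainEq (strand b (a - b) α) (strand 0 (a - b) (andOutDiff n c α β)) u} :=
  have hstrand : Function.Bijective (strand (n := n) b (a - b)) :=
    ((AddGroup.addLeft_bijective _).comp hρ).comp_right
  Nat.card_congr <| (Equiv.ofBijective _ hstrand).subtypeEquiv <|
    xorDiff_eq_iff_chainEq hf hab hρ.surjective

lemma sum_b2i_probitsOf (hab : b ≤ a) (hρ : Function.Bijective (· * ((a - b : ℕ) : Fin n))) :
    ∑ i, b2i (probitsOf n a b α i) = ((∑ k, (probBit (strand b (a - b) α) k).toNat : ℕ) : ℤ) := by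
  rw [Nat.cast_sum]
  refine (Fintype.sum_bijective _ hρ _ _ fun k => ?_).symm
  rw [probitsOf_mul hab]
  cases probBit (strand b (a - b) α) k <;> rfl

end Reindex

lemma diffProb_eq_card (f : (Fin n → Bool) → Fin n → Bool) (α β : Fin n → Bool) :
    diffProb n f α β =
      Nat.card {x // (fun i => f x i ^^ f (fun j => x j ^^ α j) i) = β} / 2 ^ n := by
  rw [diffProb, Nat.card_eq_fintype_card, Fintype.card_subtype]

open Classical in
theorem diffProb_eq {f : (Fin n → Bool) → Fin n → Bool}
    (hf : ∀ x, f x = fun i => (rotL n a x i && rotL n b x i) ^^ rotL n c x i) (hab : b ≤ a)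
    (hgcd : Nat.Coprime n (a - b)) {z : Fin n} (hz : α z = false) :
    diffProb n f α β = if IsValidAndDiff n a b α (andOutDiff n c α β)
      then (2 : ℚ) ^ (-∑ i, b2i (probitsOf n a b α i)) else 0 := by
  have : NeZero n := NeZero.of_pos z.pos
  have hρ : Function.Bijective (· * ((a - b : ℕ) : Fin n)) := by
    convert (Nat.card_fin n ▸ hgcd).nsmul_right_bijective (G := Fin n) using 2 with k
    rw [nsmul_eq_mul, mul_comm]
  obtain ⟨z', hz'⟩ := ((AddGroup.addLeft_bijective (b : Fin n)).comp hρ).surjective z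
  replace hz' : strand b (a - b) α z' = false := by
    simp only [Function.comp_apply] at hz'
    rw [strand, hz', hz]
  rw [diffProb_eq_card, card_xorDiff_eq_card_chainEq hf hab hρ,
    isValidAndDiff_iff_chainCompatible hab hρ.surjective, sum_b2i_probitsOf hab hρ]
  split_ifs with hc
  · have h2n : (2 : ℚ) ^ n = 2 ^ Nat.card {k // freeBit (strand b (a - b) α) k = true} *
        2 ^ ∑ k, (probBit (strand b (a - b) α) k).toNat := by
      rw [← pow_add, card_freeBit_add_sum_probBit]
    rw [card_chainEq hz' hc, h2n, zpow_neg, zpow_natCast, Nat.cast_pow, Nat.cast_ofNat,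
      div_mul_cancel_left₀ (by positivity)]
  · have : IsEmpty {u // ChainEq (strand b (a - b) α) (strand 0 (a - b) (andOutDiff n c α β)) u} :=
      ⟨fun u => hc u.2.compatible⟩
    rw [Nat.card_of_isEmpty, Nat.cast_zero, zero_div]

end Differential

lemma or_encoding (v x y : Bool) :
    (b2i v - b2i x ≥ 0 ∧ b2i v - b2i y ≥ 0 ∧ b2i x + b2i y - b2i v ≥ 0) ↔ v = (x || y) := by
  cases v <;> cases x <;> cases y <;> decide

lemma and_not_and_encoding (d x y z : Bool) :
    (b2i d + b2i x ≤ 1 ∧ b2i d - b2i y ≤ 0 ∧ b2i d - b2i z ≤ 0 ∧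
      b2i d + b2i x - b2i y - b2i z ≥ -1) ↔ d = (y && !x && z) := by
  cases d <;> cases x <;> cases y <;> cases z <;> decide

lemma xor_encoding (x y z : Bool) :
    (b2i x + b2i y - b2i z ≥ 0 ∧ b2i x - b2i y + b2i z ≥ 0 ∧ -b2i x + b2i y + b2i z ≥ 0 ∧
      b2i x + b2i y + b2i z ≤ 2) ↔ z = (x ^^ y) := by
  cases x <;> cases y <;> cases z <;> decide

lemma imp_encoding (x y : Bool) : b2i x - b2i y ≤ 0 ↔ (x = true → y = true) := by
  cases x <;> cases y <;> decide

lemma eq_of_flag_encoding (g g' d : Bool) :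
    (b2i g - b2i g' + b2i d ≤ 1 ∧ -b2i g + b2i g' + b2i d ≤ 1) ↔ (d = true → g = g') := by
  cases g <;> cases g' <;> cases d <;> decide

lemma milp_bit_iff (αa αb α2 αc β γ γe v d p : Bool) :
    (b2i v - b2i αa ≥ 0 ∧ b2i v - b2i αb ≥ 0 ∧ b2i αa + b2i αb - b2i v ≥ 0 ∧
      b2i d + b2i αa ≤ 1 ∧ b2i d - b2i αb ≤ 0 ∧ b2i d - b2i α2 ≤ 0 ∧
      b2i d + b2i αa - b2i αb - b2i α2 ≥ -1 ∧
      b2i γ + b2i αc - b2i β ≥ 0 ∧ b2i γ - b2i αc + b2i β ≥ 0 ∧ -b2i γ + b2i αc + b2i β ≥ 0 ∧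
      b2i γ + b2i αc + b2i β ≤ 2 ∧
      b2i γ - b2i v ≤ 0 ∧ b2i γ - b2i γe + b2i d ≤ 1 ∧ -b2i γ + b2i γe + b2i d ≤ 1 ∧
      b2i v + b2i d - b2i p ≥ 0 ∧ b2i v - b2i d + b2i p ≥ 0 ∧ -b2i v + b2i d + b2i p ≥ 0 ∧
      b2i v + b2i d + b2i p ≤ 2) ↔
    v = (αa || αb) ∧ d = (αb && !αa && α2) ∧ β = (γ ^^ αc) ∧ (γ = true → v = true) ∧
      (d = true → γ = γe) ∧ p = (v ^^ d) := by
  rw [← or_encoding, ← and_not_and_encoding, ← xor_encoding γ αc β, ← imp_encoding,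
    ← eq_of_flag_encoding, ← xor_encoding v d p]
  simp only [and_assoc]

lemma sum_b2i_le_of_eq_false {n : ℕ} {α : Fin n → Bool} {z : Fin n} (hz : α z = false) :
    ∑ i, b2i (α i) ≤ (n : ℤ) - 1 := by
  have hlt : ∑ i, b2i (α i) < ∑ _i : Fin n, (1 : ℤ) :=
    Finset.sum_lt_sum (fun i _ => by cases α i <;> decide) ⟨z, Finset.mem_univ _, by simp [hz, b2i]⟩
  simp only [Finset.sum_const, Finset.card_univ, Fintype.card_fin, nsmul_eq_mul, mul_one] at hlt
  omega

lemma sys_iff {n a b c : ℕ} {α β γ v d p : Fin n → Bool} {pro : ℤ} :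
    Sys n a b c α β γ v d p pro ↔
      γ = andOutDiff n c α β ∧ v = varibitsOf n a b α ∧ d = doublebitsOf n a b α ∧
        p = probitsOf n a b α ∧ IsValidAndDiff n a b α γ ∧ ∑ i, b2i (α i) ≤ (n : ℤ) - 1 ∧
          pro = ∑ i, b2i (p i) := by
  simp only [Sys, milp_bit_iff, forall_and]
  constructor
  · rintro ⟨⟨hv, hd, hβ, hvar, hdbl, hp⟩, hsum, hpro⟩
    obtain rfl : v = varibitsOf n a b α := funext hv
    obtain rfl : d = doublebitsOf n a b α := funext hd
    refine ⟨funext fun i => ?_, rfl, rfl, funext hp, ⟨hvar, hdbl⟩, hsum, hpro⟩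
    simp [andOutDiff, hβ i]
  · rintro ⟨rfl, rfl, rfl, rfl, ⟨hvar, hdbl⟩, hsum, rfl⟩
    exact ⟨⟨fun _ => rfl, fun _ => rfl, fun _ => by simp [andOutDiff], hvar, hdbl, fun _ => rfl⟩,
      hsum, rfl⟩

theorem milp_diff_model_correct_general (n a b c : ℕ)
    (hab : a > b) (hgcd : Nat.gcd n (a - b) = 1)
    (f : (Fin n → Bool) → Fin n → Bool)
    (hf : ∀ x, f x = fun i => xor (rotL n a x i && rotL n b x i) (rotL n c x i))
    (α β : Fin n → Bool) (hα : α ≠ fun _ => true) :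
    ((∃ γ varibits doublebits probits pro,
        Sys n a b c α β γ varibits doublebits probits pro)
      ↔ 0 < diffProb n f α β) ∧
    (∀ γ varibits doublebits probits pro,
        Sys n a b c α β γ varibits doublebits probits pro →
          diffProb n f α β = (2 : ℚ) ^ (-pro)) := by
  obtain ⟨z, hz⟩ : ∃ z, α z = false := by
    by_contra! h
    exact hα (funext fun i => by simpa using h i)
  have hprob := diffProb_eq (c := c) (β := β) hf hab.le hgcd hz
  have hsol : ∀ {γ v d p pro}, Sys n a b c α β γ v d p pro →
      diffProb n f α β = (2 : ℚ) ^ (-pro) := fun h => by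
    obtain ⟨rfl, rfl, rfl, rfl, hvalid, -, rfl⟩ := sys_iff.1 h
    rw [hprob, if_pos hvalid]
  refine ⟨⟨fun ⟨_, _, _, _, _, h⟩ => hsol h ▸ by positivity, fun hpos => ?_⟩, fun _ _ _ _ _ => hsol⟩
  have hvalid : IsValidAndDiff n a b α (andOutDiff n c α β) := by
    by_contra h
    rw [hprob, if_neg h] at hpos
    exact hpos.false
  exact ⟨_, _, _, _, _, sys_iff.2 ⟨rfl, rfl, rfl, rfl, hvalid, sum_b2i_le_of_eq_false hz, rfl⟩⟩

theorem milp_diff_model_correct (n a b c : ℕ) (hn : 0 < n) (hneven : Even n)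
    (hab : a > b) (hgcd : Nat.gcd n (a - b) = 1)
    (f : (Fin n → Bool) → Fin n → Bool)
    (hf : ∀ x, f x = fun i => xor (rotL n a x i && rotL n b x i) (rotL n c x i))
    (α β : Fin n → Bool) (hα : α ≠ fun _ => true) :
    ((∃ γ varibits doublebits probits pro,
        Sys n a b c α β γ varibits doublebits probits pro)
      ↔ 0 < diffProb n f α β) ∧
    (∀ γ varibits doublebits probits pro,
        Sys n a b c α β γ varibits doublebits probits pro →
          diffProb n f α β = (2 : ℚ) ^ (-pro)) :=
  milp_diff_model_correct_general n a b c hab hgcd f hf α β hα
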